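/- arXiv:2302.13997 — 2 statements merged into one kernel-verified Lean document; each statement's English description precedes it below -/
import Mathlib

section
/- Every instance of Anonymous Refugee Housing whose topology is a path P = v_1 v_2 ... v_k with k ≥ 3, where v_1 is occupied by an inhabitant i with A_i = {1}, admits an inhabitant-respecting housing if and only if the reduced instance obtained by housing one refugee on v_2, deleting v_1 and v_2, decreasing |R| by one, and replacing the approval set A_j of the inhabitant occupying v_3 (if any) by {a - 1 : a ∈ A_j, a ≥ 1}, admits an inhabitant-respecting housing. -/
def Respects {V I R : Type*} (G : SimpleGraph V) (ι : I → V) (A : I → Set ℕ)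
    (π : R → V) : Prop :=
  Function.Injective π ∧ (∀ r i, π r ≠ ι i) ∧
    ∀ i, (G.neighborSet (ι i) ∩ Set.range π).ncard ∈ A i

/-- The potential neighbour positions (as naturals) of position `p` on a path. -/
def nb (p : ℕ) : Set ℕ := {x | x + 1 = p ∨ p + 1 = x}

lemma card_nbr {n : ℕ} (v : Fin n) (T : Set (Fin n)) :
    ((SimpleGraph.pathGraph n).neighborSet v ∩ T).ncard
      = ((Fin.val '' T) ∩ nb v.val).ncard := by
  rw [← Set.ncard_image_of_injective _ Fin.val_injective]
  congr 1
  ext x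
  simp only [Set.mem_image, Set.mem_inter_iff, SimpleGraph.mem_neighborSet,
    SimpleGraph.pathGraph_adj, nb, Set.mem_setOf_eq]
  constructor
  · rintro ⟨y, ⟨hadj, hy⟩, rfl⟩
    exact ⟨⟨y, hy, rfl⟩, hadj.symm.imp (fun h => h) (fun h => h)⟩
  · rintro ⟨⟨y, hy, rfl⟩, hadj⟩
    exact ⟨y, ⟨hadj.symm.imp (fun h => h) (fun h => h), hy⟩, rfl⟩

lemma inj2 : Function.Injective (fun x : ℕ => x + 2) := fun a b h => by simpa using h

lemma count2 (S' : Set ℕ) :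
    (({1} ∪ (fun x => x + 2) '' S') ∩ nb 2).ncard = (S' ∩ nb 0).ncard + 1 := by
  have hset : ({1} ∪ (fun x => x + 2) '' S') ∩ nb 2
      = insert 1 ((fun x => x + 2) '' (S' ∩ nb 0)) := by
    ext x
    simp only [Set.mem_inter_iff, Set.mem_union, Set.mem_singleton_iff, Set.mem_image,
      Set.mem_insert_iff, nb, Set.mem_setOf_eq]
    constructor
    · rintro ⟨h1 | ⟨y, hy, rfl⟩, h2⟩
      · left; exact h1
      · right; exact ⟨y, ⟨hy, by omega⟩, rfl⟩
    · rintro (rfl | ⟨y, ⟨hy, hy2⟩, rfl⟩)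
      · exact ⟨Or.inl rfl, by omega⟩
      · exact ⟨Or.inr ⟨y, hy, rfl⟩, by omega⟩
  rw [hset]
  have hfin : ((fun x => x + 2) '' (S' ∩ nb 0)).Finite := by
    apply Set.Finite.subset (Set.finite_singleton 3)
    rintro x ⟨y, ⟨hy, hy2⟩, rfl⟩
    simp only [nb, Set.mem_setOf_eq] at hy2
    simp only [Set.mem_singleton_iff]
    omega
  rw [Set.ncard_insert_of_notMem (by rintro ⟨y, hy, h⟩; simp only [] at h; omega) hfin,
    Set.ncard_image_of_injective _ inj2]

lemma count3 (S' : Set ℕ) (p : ℕ) (hp : 3 ≤ p) :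
    (({1} ∪ (fun x => x + 2) '' S') ∩ nb p).ncard = (S' ∩ nb (p - 2)).ncard := by
  have hset : ({1} ∪ (fun x => x + 2) '' S') ∩ nb p
      = (fun x => x + 2) '' (S' ∩ nb (p - 2)) := by
    ext x
    simp only [Set.mem_inter_iff, Set.mem_union, Set.mem_singleton_iff, Set.mem_image,
      nb, Set.mem_setOf_eq]
    constructor
    · rintro ⟨h1 | ⟨y, hy, rfl⟩, h2⟩
      · omega
      · exact ⟨y, ⟨hy, by omega⟩, rfl⟩
    · rintro ⟨y, ⟨hy, hy2⟩, rfl⟩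
      exact ⟨Or.inr ⟨y, hy, rfl⟩, by omega⟩
  rw [hset, Set.ncard_image_of_injective _ inj2]

lemma count0 (S : Set ℕ) (h1 : 1 ∈ S) : (S ∩ nb 0).ncard = 1 := by
  have : S ∩ nb 0 = {1} := by
    ext x
    simp only [Set.mem_inter_iff, nb, Set.mem_setOf_eq, Set.mem_singleton_iff]
    constructor
    · rintro ⟨hx, h⟩; omega
    · rintro rfl; exact ⟨h1, by omega⟩
  rw [this, Set.ncard_singleton]

/-- on a path `v₁ … v_k` (`k ≥ 3`) whose first vertex is occupied
by an inhabitant `i₀` with approval set `{1}` and whose second vertex is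
unoccupied, a respecting housing exists iff the reduced instance (a refugee
housed on `v₂`, vertices `v₁, v₂` deleted, one refugee fewer, approval set of
the inhabitant at `v₃` shifted down by one) admits one. -/
theorem stmt_9 {I : Type*} (k m : ℕ) (hk : 3 ≤ k) (hm : 1 ≤ m)
    (ι : I → Fin k) (hι : Function.Injective ι) (A : I → Set ℕ)
    (i₀ : I) (h0 : (ι i₀ : ℕ) = 0) (hA0 : A i₀ = {1})
    (hfree : ∀ i, (ι i : ℕ) ≠ 1)
    (ι' : {i : I // i ≠ i₀} → Fin (k - 2))
    (hι' : ∀ i, (ι' i : ℕ) + 2 = (ι i.1 : ℕ))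
    (A' : {i : I // i ≠ i₀} → Set ℕ)
    (hA' : ∀ i, ((ι i.1 : ℕ) = 2 → A' i = {n | n + 1 ∈ A i.1}) ∧
                ((ι i.1 : ℕ) ≠ 2 → A' i = A i.1)) :
    (∃ π : Fin m → Fin k, Respects (SimpleGraph.pathGraph k) ι A π) ↔
      ∃ π' : Fin (m - 1) → Fin (k - 2),
        Respects (SimpleGraph.pathGraph (k - 2)) ι' A' π' := by
  have hp2 : ∀ i : {i : I // i ≠ i₀}, 2 ≤ (ι i.1 : ℕ) := by
    rintro ⟨i, hi⟩
    have h1 := hfree i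
    have h2 : (ι i : ℕ) ≠ 0 := by
      intro h
      exact hi (hι (Fin.val_injective (h.trans h0.symm)))
    show (2:ℕ) ≤ (ι i : ℕ)
    omega
  have hι'v : ∀ i, (ι' i : ℕ) = (ι i.1 : ℕ) - 2 := fun i => by have := hι' i; omega
  have key : ∀ (S' : Set ℕ) (i : {i : I // i ≠ i₀}),
      ((({1} ∪ (fun x => x + 2) '' S') ∩ nb (ι i.1 : ℕ)).ncard ∈ A i.1 ↔
        (S' ∩ nb ((ι i.1 : ℕ) - 2)).ncard ∈ A' i) := by
    intro S' i
    rcases eq_or_ne ((ι i.1 : ℕ)) 2 with h2 | h2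
    · rw [h2, count2, (hA' i).1 h2]
      rfl
    · have h3 : 3 ≤ (ι i.1 : ℕ) := by have := hp2 i; omega
      rw [count3 _ _ h3, (hA' i).2 h2]
  constructor
  · rintro ⟨π, hinj, havoid, hcount⟩
    have hc0 := hcount i₀
    rw [card_nbr, h0, hA0, Set.mem_singleton_iff] at hc0
    have h1S : (1 : ℕ) ∈ Fin.val '' Set.range π := by
      by_contra h1
      have he : (Fin.val '' Set.range π) ∩ nb 0 = ∅ := by
        ext x
        simp only [Set.mem_inter_iff, Set.mem_empty_iff_false, iff_false, not_and]
        intro hx hnb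
        simp only [nb, Set.mem_setOf_eq] at hnb
        have hx1 : x = 1 := by omega
        exact h1 (hx1 ▸ hx)
      rw [he, Set.ncard_empty] at hc0
      omega
    obtain ⟨a, ⟨r₁, rfl⟩, hv1⟩ := h1S
    let f : Fin (m - 1) → Fin m := fun j =>
      ⟨if j.val < r₁.val then j.val else j.val + 1, by have := j.isLt; split <;> omega⟩
    have hfval : ∀ j : Fin (m - 1),
        (f j).val = if j.val < r₁.val then j.val else j.val + 1 := fun j => rfl
    have hfne : ∀ j, f j ≠ r₁ := by
      intro j h
      have h2 : (if j.val < r₁.val then j.val else j.val + 1) = r₁.val := congrArg Fin.val h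
      split at h2 <;> omega
    have hfinj : Function.Injective f := by
      intro a b h
      have h2 : (if a.val < r₁.val then a.val else a.val + 1)
          = (if b.val < r₁.val then b.val else b.val + 1) := congrArg Fin.val h
      apply Fin.ext
      split at h2 <;> split at h2 <;> omega
    have hfsurj : ∀ r : Fin m, r ≠ r₁ → ∃ j, f j = r := by
      intro r hr
      have hrv : r.val ≠ r₁.val := fun h => hr (Fin.ext h)
      rcases lt_or_gt_of_ne hrv with h | h
      · refine ⟨⟨r.val, by have := r₁.isLt; omega⟩, Fin.ext ?_⟩
        show (if r.val < r₁.val then r.val else r.val + 1) = r.val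
        split <;> omega
      · refine ⟨⟨r.val - 1, by have := r.isLt; omega⟩, Fin.ext ?_⟩
        show (if r.val - 1 < r₁.val then r.val - 1 else r.val - 1 + 1) = r.val
        split <;> omega
    have hge2 : ∀ j, 2 ≤ (π (f j)).val := by
      intro j
      have hne0 : (π (f j)).val ≠ 0 := by
        intro h
        exact havoid (f j) i₀ (Fin.ext (by rw [h, h0]))
      have hne1 : (π (f j)).val ≠ 1 := by
        intro h
        exact hfne j (hinj (Fin.ext (h.trans hv1.symm)))
      omega
    let π' : Fin (m - 1) → Fin (k - 2) := fun j =>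
      ⟨(π (f j)).val - 2, by have := hge2 j; have := (π (f j)).isLt; omega⟩
    have hπ'v : ∀ j, (π' j).val = (π (f j)).val - 2 := fun j => rfl
    have hS : Fin.val '' Set.range π
        = {1} ∪ (fun x => x + 2) '' (Fin.val '' Set.range π') := by
      apply Set.Subset.antisymm
      · rintro x ⟨a, ⟨r, rfl⟩, rfl⟩
        by_cases hr : r = r₁
        · exact Or.inl (by rw [hr]; exact hv1)
        · obtain ⟨j, rfl⟩ := hfsurj r hr
          refine Or.inr ⟨(π' j).val, ⟨π' j, ⟨j, rfl⟩, rfl⟩, ?_⟩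
          show (π' j).val + 2 = (π (f j)).val
          rw [hπ'v]; have := hge2 j; omega
      · rintro x (hx | ⟨y, ⟨b, ⟨j, rfl⟩, rfl⟩, rfl⟩)
        · exact ⟨π r₁, ⟨r₁, rfl⟩, by rw [hv1]; exact hx.symm⟩
        · refine ⟨π (f j), ⟨f j, rfl⟩, ?_⟩
          show (π (f j)).val = (π' j).val + 2
          rw [hπ'v]; have := hge2 j; omega
    refine ⟨π', ?_, ?_, ?_⟩
    · intro a b h
      have h2 : (π (f a)).val - 2 = (π (f b)).val - 2 := congrArg Fin.val h
      have ha := hge2 a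
      have hb := hge2 b
      exact hfinj (hinj (Fin.ext (by omega)))
    · intro j i h
      have h2 : (π (f j)).val - 2 = (ι' i).val := congrArg Fin.val h
      have h3 : (π (f j)).val = (ι i.1).val := by
        have := hι' i; have := hge2 j; omega
      exact havoid (f j) i.1 (Fin.ext h3)
    · intro i
      have hc := hcount i.1
      rw [card_nbr, hS] at hc
      have h2 := (key _ i).mp hc
      rw [card_nbr, hι'v i]
      exact h2
  · rintro ⟨π', hinj', havoid', hcount'⟩
    let π : Fin m → Fin k := fun r =>
      if h : r.val = 0 then ⟨1, by omega⟩
      else ⟨(π' ⟨r.val - 1, by have := r.isLt; omega⟩).val + 2,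
        by have := (π' ⟨r.val - 1, by have := r.isLt; omega⟩).isLt; omega⟩
    have hπ0 : ∀ r : Fin m, r.val = 0 → (π r).val = 1 := by
      intro r h
      simp only [π, dif_pos h]
    have hπv : ∀ (r : Fin m) (j : Fin (m - 1)), j.val + 1 = r.val →
        (π r).val = (π' j).val + 2 := by
      intro r j hj
      have h : r.val ≠ 0 := by omega
      simp only [π, dif_neg h]
      have he : (⟨r.val - 1, by have := r.isLt; omega⟩ : Fin (m - 1)) = j :=
        Fin.ext (show r.val - 1 = j.val by omega)
      rw [he]
    have hS : Fin.val '' Set.range π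
        = {1} ∪ (fun x => x + 2) '' (Fin.val '' Set.range π') := by
      apply Set.Subset.antisymm
      · rintro x ⟨a, ⟨r, rfl⟩, rfl⟩
        by_cases hr : r.val = 0
        · exact Or.inl (hπ0 r hr)
        · refine Or.inr ⟨(π' ⟨r.val - 1, by have := r.isLt; omega⟩).val,
            ⟨_, ⟨⟨r.val - 1, by have := r.isLt; omega⟩, rfl⟩, rfl⟩, ?_⟩
          exact (hπv r ⟨r.val - 1, by have := r.isLt; omega⟩
            (show r.val - 1 + 1 = r.val by omega)).symm
      · rintro x (hx | ⟨y, ⟨b, ⟨j, rfl⟩, rfl⟩, rfl⟩)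
        · exact ⟨π ⟨0, by omega⟩, ⟨⟨0, by omega⟩, rfl⟩, by rw [hπ0 _ rfl]; exact hx.symm⟩
        · refine ⟨π ⟨j.val + 1, by have := j.isLt; omega⟩,
            ⟨⟨j.val + 1, by have := j.isLt; omega⟩, rfl⟩, ?_⟩
          exact hπv ⟨j.val + 1, by have := j.isLt; omega⟩ j rfl
    refine ⟨π, ?_, ?_, ?_⟩
    · intro a b h
      have hv := congrArg Fin.val h
      by_cases ha : a.val = 0 <;> by_cases hb : b.val = 0
      · exact Fin.ext (ha.trans hb.symm)
      · rw [hπ0 a ha, hπv b ⟨b.val - 1, by have := b.isLt; omega⟩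
          (show b.val - 1 + 1 = b.val by omega)] at hv
        omega
      · rw [hπ0 b hb, hπv a ⟨a.val - 1, by have := a.isLt; omega⟩
          (show a.val - 1 + 1 = a.val by omega)] at hv
        omega
      · rw [hπv a ⟨a.val - 1, by have := a.isLt; omega⟩
          (show a.val - 1 + 1 = a.val by omega),
          hπv b ⟨b.val - 1, by have := b.isLt; omega⟩
          (show b.val - 1 + 1 = b.val by omega)] at hv
        have he : (⟨a.val - 1, by have := a.isLt; omega⟩ : Fin (m - 1))
            = ⟨b.val - 1, by have := b.isLt; omega⟩ :=
          hinj' (Fin.ext (by omega))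
        have hv2 : a.val - 1 = b.val - 1 := congrArg Fin.val he
        exact Fin.ext (by omega)
    · intro r i h
      have hv := congrArg Fin.val h
      by_cases hr : r.val = 0
      · rw [hπ0 r hr] at hv
        exact hfree i hv.symm
      · rw [hπv r ⟨r.val - 1, by have := r.isLt; omega⟩
          (show r.val - 1 + 1 = r.val by omega)] at hv
        by_cases hi : i = i₀
        · rw [hi, h0] at hv
          omega
        · refine havoid' ⟨r.val - 1, by have := r.isLt; omega⟩ ⟨i, hi⟩ (Fin.ext ?_)
          have := hι'v ⟨i, hi⟩
          have := hp2 ⟨i, hi⟩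
          have hb : (ι (⟨i, hi⟩ : {i : I // i ≠ i₀}).1 : ℕ) = (ι i : ℕ) := rfl
          omega
    · intro i
      by_cases hi : i = i₀
      · subst hi
        rw [card_nbr, h0, hA0, Set.mem_singleton_iff]
        refine count0 _ ⟨π ⟨0, by omega⟩, ⟨⟨0, by omega⟩, rfl⟩, hπ0 _ rfl⟩
      · have hc := hcount' ⟨i, hi⟩
        rw [card_nbr, hι'v ⟨i, hi⟩] at hc
        have h2 := (key (Fin.val '' Set.range π') ⟨i, hi⟩).mpr hc
        rw [card_nbr, hS]
        exact h2
end

section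
/- Let φ be a CNF formula with variables x_1,...,x_n and clauses C_1,...,C_m, each clause having at most 3 literals. Construct an Anonymous Refugee Housing instance as follows: for each variable x_i, a path t_i v_i f_i where v_i is occupied by an inhabitant with approval set {1} and t_i, f_i are unoccupied; for each clause C_j, a vertex c_j occupied by an inhabitant approving the interval {1,...,|C_j|}, adjacent to t_i whenever x_i occurs positively in C_j and to f_i whenever x_i occurs negatively in C_j; and there are exactly n refugees. Then φ is satisfiable if and only if the constructed instance admits an inhabitant-respecting housing. -/
/-- The topology of the SAT reduction: for each variable `i` a path
`t_i v_i f_i`, realised as ports `Sum.inl (i, true)` (the `t`-port),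
`Sum.inl (i, false)` (the `f`-port) and middle vertex `Sum.inr (Sum.inl i)`;
for each clause `j` a vertex `Sum.inr (Sum.inr j)` adjacent to the `t`-port of
`i` whenever the literal `(i, true)` is in clause `j` and to the `f`-port
whenever `(i, false)` is. -/
def satGraph (n m : ℕ) (C : Fin m → Finset (Fin n × Bool)) :
    SimpleGraph ((Fin n × Bool) ⊕ (Fin n ⊕ Fin m)) :=
  SimpleGraph.fromRel (fun a b =>
    (∃ i bb, a = Sum.inl (i, bb) ∧ b = Sum.inr (Sum.inl i)) ∨
    (∃ l j, a = Sum.inl l ∧ b = Sum.inr (Sum.inr j) ∧ l ∈ C j))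

lemma nbhd_mid (n m : ℕ) (C : Fin m → Finset (Fin n × Bool)) (i : Fin n) :
    (satGraph n m C).neighborSet (Sum.inr (Sum.inl i)) =
      {Sum.inl (i, true), Sum.inl (i, false)} := by
  ext x
  simp only [SimpleGraph.mem_neighborSet, satGraph, SimpleGraph.fromRel_adj,
    Set.mem_insert_iff, Set.mem_singleton_iff]
  constructor
  · rintro ⟨hne, h | h⟩
    · rcases h with ⟨i', bb, h1, h2⟩ | ⟨l, j, h1, h2, h3⟩
      · simp at h1
      · simp at h1
    · rcases h with ⟨i', bb, h1, h2⟩ | ⟨l, j, h1, h2, h3⟩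
      · simp only [Sum.inr.injEq, Sum.inl.injEq] at h2
        subst h2
        cases bb <;> simp [h1]
      · simp at h2
  · rintro (rfl | rfl) <;>
    exact ⟨by simp, Or.inr (Or.inl ⟨i, _, rfl, rfl⟩)⟩

lemma nbhd_clause (n m : ℕ) (C : Fin m → Finset (Fin n × Bool)) (j : Fin m) :
    (satGraph n m C).neighborSet (Sum.inr (Sum.inr j)) =
      Sum.inl '' (C j : Set (Fin n × Bool)) := by
  ext x
  simp only [SimpleGraph.mem_neighborSet, satGraph, SimpleGraph.fromRel_adj,
    Set.mem_image, Finset.mem_coe]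
  constructor
  · rintro ⟨hne, h | h⟩
    · rcases h with ⟨i', bb, h1, h2⟩ | ⟨l, j', h1, h2, h3⟩
      · simp at h1
      · simp at h1
    · rcases h with ⟨i', bb, h1, h2⟩ | ⟨l, j', h1, h2, h3⟩
      · simp at h2
      · simp at h2
        subst h2
        exact ⟨l, h3, h1.symm⟩
  · rintro ⟨l, hl, rfl⟩
    exact ⟨by simp, Or.inr (Or.inr ⟨l, j, rfl, rfl, hl⟩)⟩

/-- the CNF formula (clauses of size at most 3) is satisfiable iff
the constructed Anonymous Refugee Housing instance, with `n` refugees housed on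
ports, middle inhabitants approving `{1}` and clause inhabitants approving
`{1, …, |C_j|}`, admits an inhabitant-respecting housing. -/
theorem stmt_13 (n m : ℕ) (C : Fin m → Finset (Fin n × Bool))
    (h3 : ∀ j, (C j).card ≤ 3) :
    (∃ α : Fin n → Bool, ∀ j, ∃ l ∈ C j, α l.1 = l.2) ↔
      ∃ π : Fin n → ((Fin n × Bool) ⊕ (Fin n ⊕ Fin m)),
        Function.Injective π ∧ (∀ r, ∃ l, π r = Sum.inl l) ∧
        (∀ i : Fin n,
          ((satGraph n m C).neighborSet (Sum.inr (Sum.inl i)) ∩ Set.range π).ncard = 1) ∧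
        (∀ j : Fin m,
          ((satGraph n m C).neighborSet (Sum.inr (Sum.inr j)) ∩ Set.range π).ncard ∈
            Set.Icc 1 (C j).card) := by
  constructor
  · rintro ⟨α, hα⟩
    refine ⟨fun i => Sum.inl (i, α i), ?_, fun r => ⟨_, rfl⟩, ?_, ?_⟩
    · intro a b hab
      simpa using congrArg (fun x => Sum.elim Prod.fst (fun _ => a) x) hab
    · intro i
      have : (satGraph n m C).neighborSet (Sum.inr (Sum.inl i)) ∩
          Set.range (fun i => Sum.inl (i, α i) : Fin n → (Fin n × Bool) ⊕ (Fin n ⊕ Fin m))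
          = {Sum.inl (i, α i)} := by
        ext x
        simp only [nbhd_mid, Set.mem_inter_iff, Set.mem_range, Set.mem_insert_iff,
          Set.mem_singleton_iff]
        constructor
        · rintro ⟨h1 | h1, r, rfl⟩ <;> simp only [Sum.inl.injEq, Prod.mk.injEq] at h1 <;>
            rcases h1 with ⟨rfl, _⟩ <;> rfl
        · rintro rfl
          cases h : α i <;> simp [h] <;> exact ⟨i, by rw [h]⟩
      rw [this, Set.ncard_singleton]
    · intro j
      have hfin : ((satGraph n m C).neighborSet (Sum.inr (Sum.inr j)) ∩
          Set.range (fun i => Sum.inl (i, α i) : Fin n → (Fin n × Bool) ⊕ (Fin n ⊕ Fin m))).Finite :=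
        Set.toFinite _
      constructor
      · obtain ⟨l, hl, hsat⟩ := hα j
        have hmem : (Sum.inl l : (Fin n × Bool) ⊕ (Fin n ⊕ Fin m)) ∈
            (satGraph n m C).neighborSet (Sum.inr (Sum.inr j)) ∩ Set.range
              (fun i => Sum.inl (i, α i)) := by
          refine ⟨by rw [nbhd_clause]; exact ⟨l, hl, rfl⟩, l.1, ?_⟩
          simp [hsat, Prod.ext_iff]
        have := Set.ncard_pos hfin |>.2 ⟨_, hmem⟩
        omega
      · calc ((satGraph n m C).neighborSet (Sum.inr (Sum.inr j)) ∩ _).ncard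
            ≤ ((satGraph n m C).neighborSet (Sum.inr (Sum.inr j))).ncard :=
              Set.ncard_le_ncard Set.inter_subset_left (Set.toFinite _)
          _ = (C j).card := by
              rw [nbhd_clause, Set.ncard_image_of_injective _ Sum.inl_injective]
              simp [Set.ncard_coe_finset]
  · rintro ⟨π, hinj, hports, hmid, hclause⟩
    have key : ∀ i : Fin n, ∃ b : Bool,
        (satGraph n m C).neighborSet (Sum.inr (Sum.inl i)) ∩ Set.range π =
          {Sum.inl (i, b)} := by
      intro i
      obtain ⟨a, ha⟩ := Set.ncard_eq_one.1 (hmid i)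
      have hamem : a ∈ (satGraph n m C).neighborSet (Sum.inr (Sum.inl i)) ∩ Set.range π := by
        rw [ha]; rfl
      rw [nbhd_mid] at hamem
      rcases hamem.1 with rfl | rfl
      · exact ⟨true, ha⟩
      · exact ⟨false, ha⟩
    choose α hαspec using key
    refine ⟨α, fun j => ?_⟩
    have h1 := (hclause j).1
    have hne : ((satGraph n m C).neighborSet (Sum.inr (Sum.inr j)) ∩ Set.range π).Nonempty := by
      rw [← Set.ncard_pos (Set.toFinite _)]; omega
    obtain ⟨x, hx1, hx2⟩ := hne
    rw [nbhd_clause] at hx1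
    obtain ⟨l, hl, rfl⟩ := hx1
    refine ⟨l, hl, ?_⟩
    have : (Sum.inl l : (Fin n × Bool) ⊕ (Fin n ⊕ Fin m)) ∈
        (satGraph n m C).neighborSet (Sum.inr (Sum.inl l.1)) ∩ Set.range π := by
      refine ⟨?_, hx2⟩
      rw [nbhd_mid]
      rcases l with ⟨i, b⟩
      cases b <;> simp
    rw [hαspec l.1] at this
    simp only [Set.mem_singleton_iff, Sum.inl.injEq] at this
    rw [this]
end
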